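/- Let n ≥ 2 and k₂, k₃, ℓ₂, ℓ₃ ≥ 0 be integers. The number L(n,k₂,k₃,ℓ₂,ℓ₃) of rooted reduced graph structures on Fin n of combinatorial type (n,k₂,k₃,ℓ₂,ℓ₃) satisfies L(n,k₂,k₃,ℓ₂,ℓ₃) = n · s(n,k₂,k₃,ℓ₂,ℓ₃) + (ℓ₂+1) · s(n,k₂,k₃,ℓ₂+1,ℓ₃) + (ℓ₃+1) · s(n,k₂,k₃,ℓ₂,ℓ₃+1). -/

import Mathlib

/-- A rooted reduced graph structure on `Fin n`: maps `A` (symmetric) and `B` (injective on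
its domain, triangle condition), root `v₀`, every non-root vertex is `a`-adjacent and
`b`-adjacent, and the structure is connected. -/
def IsRootedRed {n : ℕ} (A B : Fin n → Option (Fin n)) (v0 : Fin n) : Prop :=
  (∀ v w, A v = some w ↔ A w = some v) ∧
  (∀ v w u, B v = some u → B w = some u → v = w) ∧
  (∀ v w u, B v = some w → B w = some u → B u = some v) ∧
  (∀ v, v ≠ v0 → A v ≠ none ∧ (B v ≠ none ∨ ∃ u, B u = some v)) ∧
  (∀ v w : Fin n, Relation.EqvGen (fun x y => A x = some y ∨ B x = some y) v w)

/-- A cyclically reduced graph structure on `Fin n`: like a rooted reduced graph structure,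
but every vertex (including the root) is `a`-adjacent and `b`-adjacent; no root is recorded. -/
def IsCycRed' {n : ℕ} (A B : Fin n → Option (Fin n)) : Prop :=
  (∀ v w, A v = some w ↔ A w = some v) ∧
  (∀ v w u, B v = some u → B w = some u → v = w) ∧
  (∀ v w u, B v = some w → B w = some u → B u = some v) ∧
  (∀ v, A v ≠ none ∧ (B v ≠ none ∨ ∃ u, B u = some v)) ∧
  (∀ v w : Fin n, Relation.EqvGen (fun x y => A x = some y ∨ B x = some y) v w)

/-- The pair `(A, B)` has combinatorial type `(n, k₂, k₃, ℓ₂, ℓ₃)`: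
`k₂` isolated `a`-edges, `k₃` isolated `b`-edges, `ℓ₂` `a`-loops, `ℓ₃` `b`-loops. -/
def HasCombType {n : ℕ} (A B : Fin n → Option (Fin n)) (k2 k3 l2 l3 : ℕ) : Prop :=
  Nat.card {v : Fin n // ∃ w, v ≠ w ∧ A v = some w} = 2 * k2 ∧
  Nat.card {v : Fin n // ∃ w, v ≠ w ∧ B v = some w ∧ B w = none} = k3 ∧
  Nat.card {v : Fin n // A v = some v} = l2 ∧
  Nat.card {v : Fin n // B v = some v} = l3

/-- The number of rooted reduced graph structures on `Fin n` of combinatorial type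
`(n, k₂, k₃, ℓ₂, ℓ₃)`. -/
noncomputable def L (n k2 k3 l2 l3 : ℕ) : ℕ :=
  Nat.card {t : (Fin n → Option (Fin n)) × (Fin n → Option (Fin n)) × Fin n //
    IsRootedRed t.1 t.2.1 t.2.2 ∧ HasCombType t.1 t.2.1 k2 k3 l2 l3}

/-- The number of cyclically reduced graph structures on `Fin n` of combinatorial type
`(n, k₂, k₃, ℓ₂, ℓ₃)`. -/
noncomputable def s (n k2 k3 l2 l3 : ℕ) : ℕ :=
  Nat.card {p : (Fin n → Option (Fin n)) × (Fin n → Option (Fin n)) //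
    IsCycRed' p.1 p.2 ∧ HasCombType p.1 p.2 k2 k3 l2 l3}

/-!
A rooted reduced structure can fail to be cyclically reduced only at its root, which may have
no `a`-edge or no `b`-edge; for `n ≥ 2` connectivity rules out both at once. If the root has
both, forgetting it leaves a cyclically reduced structure with a marked vertex (`n · s`). If it
has no `a`-edge, putting an `a`-loop at the root gives a cyclically reduced structure with a
marked `a`-loop, one of `ℓ₂ + 1` (`(ℓ₂ + 1) · s(n, k₂, k₃, ℓ₂ + 1, ℓ₃)`); a root without
`b`-edge gets a `b`-loop in the same way. Adding or removing a loop at a vertex whose only edge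
is that loop preserves every axiom and every count except the number of loops.
-/

open Function

lemma Relation.EqvGen.mono_of_ne {α : Type*} {r r' : α → α → Prop}
    (h : ∀ a b, a ≠ b → r a b → r' a b) {a b : α} (hab : EqvGen r a b) : EqvGen r' a b := by
  rw [← EqvGen.eqvGen_reflGen]
  refine EqvGen.mono (fun x y hxy => ?_) a b hab
  rcases eq_or_ne x y with rfl | hne
  · exact .refl
  · exact .single (h x y hne hxy)

lemma Relation.EqvGen.eq_of_forall_not_rel {α : Type*} {r : α → α → Prop} {v w : α}
    (hv : ∀ x, ¬ r v x ∧ ¬ r x v) (h : EqvGen r v w) : w = v := by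
  have hker : ∀ x y, r x y → Setoid.ker (· = v) x y := fun x y hxy => by
    have hx : x ≠ v := by rintro rfl; exact (hv y).1 hxy
    have hy : y ≠ v := by rintro rfl; exact (hv x).2 hxy
    simp [hx, hy]
  simpa [Setoid.ker] using (Setoid.eqvGen_le hker h).symm

lemma Nat.card_subtype_eq_card_and_add_card_and_not {α : Type*} [Finite α] (p c : α → Prop) :
    Nat.card {a // p a} = Nat.card {a // p a ∧ c a} + Nat.card {a // p a ∧ ¬ c a} := by
  classical
  rw [← Nat.card_congr (Equiv.sumCompl fun x : {a // p a} => c x), Nat.card_sum,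
    Nat.card_congr (Equiv.subtypeSubtypeEquivSubtypeInter p c),
    Nat.card_congr (Equiv.subtypeSubtypeEquivSubtypeInter p (¬ c ·))]

lemma Nat.card_subtype_prod_eq_mul {α β : Type*} [Finite α] [Finite β] (p : α → Prop)
    (q : α → β → Prop) {m : ℕ} (h : ∀ a, p a → Nat.card {b // q a b} = m) :
    Nat.card {x : α × β // p x.1 ∧ q x.1 x.2} = Nat.card {a // p a} * m := by
  have := Fintype.ofFinite {a // p a}
  let e : {x : α × β // p x.1 ∧ q x.1 x.2} ≃ Σ a : {a // p a}, {b // q a b} :=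
    ⟨fun x => ⟨⟨x.1.1, x.2.1⟩, x.1.2, x.2.2⟩, fun y => ⟨(y.1, y.2), y.1.2, y.2.2⟩,
      fun _ => rfl, fun _ => rfl⟩
  rw [Nat.card_congr e, Nat.card_sigma, Finset.sum_congr rfl fun a _ => h a.1 a.2,
    Finset.sum_const, Finset.card_univ, smul_eq_mul, Nat.card_eq_fintype_card]

def IsolatedUpToLoop {α : Type*} (f : α → Option α) (v : α) : Prop :=
  ∀ w x, f w = some x → (w = v ↔ x = v)

section IsolatedUpToLoop

variable {α : Type*} {f : α → Option α} {v : α}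

lemma isolatedUpToLoop_of_symm (hf : ∀ a b, f a = some b ↔ f b = some a)
    (hv : f v = none ∨ f v = some v) : IsolatedUpToLoop f v := by
  intro w x hwx
  constructor
  · rintro rfl
    rcases hv with hv | hv <;> simp_all
  · rintro rfl
    rcases hv with hv | hv <;> simp_all [hf w]

lemma isolatedUpToLoop_of_injective (hf : ∀ a b c, f a = some c → f b = some c → a = b)
    (hv : f v = some v) : IsolatedUpToLoop f v := by
  intro w x hwx
  constructor
  · rintro rfl
    simp_all
  · rintro rfl
    exact hf w x x hwx hv

lemma isolatedUpToLoop_and_eq_none_iff :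
    IsolatedUpToLoop f v ∧ f v = none ↔ ¬(f v ≠ none ∨ ∃ u, f u = some v) := by
  constructor
  · rintro ⟨h, hv⟩ (hv' | ⟨u, hu⟩)
    · exact hv' hv
    · rw [(h u v hu).mpr rfl, hv] at hu
      simp at hu
  · intro h
    push Not at h
    exact ⟨fun w x hwx => by constructor <;> rintro rfl <;> simp_all, h.1⟩

lemma IsolatedUpToLoop.eq_none_or_eq_some (h : IsolatedUpToLoop f v) :
    f v = none ∨ f v = some v := by
  cases hv : f v with
  | none => exact .inl rfl
  | some x => exact .inr (by rw [← (h v x hv).mp rfl])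

end IsolatedUpToLoop

section ToggleLoop

variable {α : Type*} [DecidableEq α] {f : α → Option α} {v w x : α}

/-- Swapping `none` with the loop `some v` (and fixing every other value) makes toggling an
involution on all maps, not only on those with `f v ∈ {none, some v}`. -/
def toggleLoop (f : α → Option α) (v : α) : α → Option α :=
  update f v (Equiv.swap none (some v) (f v))

lemma toggleLoop_apply_of_ne (h : w ≠ v) : toggleLoop f v w = f w :=
  update_of_ne h _ _

lemma toggleLoop_self_eq_some_iff : toggleLoop f v v = some v ↔ f v = none := by
  simp [toggleLoop, Equiv.swap_apply_eq_iff]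

@[simp]
lemma toggleLoop_toggleLoop : toggleLoop (toggleLoop f v) v = f := by
  simp [toggleLoop]

lemma IsolatedUpToLoop.toggle (h : IsolatedUpToLoop f v) :
    IsolatedUpToLoop (toggleLoop f v) v := by
  intro w x hwx
  rcases eq_or_ne w v with rfl | hw
  · rcases h.eq_none_or_eq_some with hv | hv <;> simp_all [toggleLoop]
  · rw [toggleLoop_apply_of_ne hw] at hwx
    exact h w x hwx

lemma isolatedUpToLoop_toggleLoop_iff :
    IsolatedUpToLoop (toggleLoop f v) v ↔ IsolatedUpToLoop f v :=
  ⟨fun h => toggleLoop_toggleLoop (f := f) ▸ h.toggle, .toggle⟩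

namespace IsolatedUpToLoop

lemma toggleLoop_eq_some_iff (h : IsolatedUpToLoop f v) (hx : x ≠ v) :
    toggleLoop f v w = some x ↔ f w = some x := by
  rcases eq_or_ne w v with rfl | hw
  · exact ⟨fun hwx => absurd ((h.toggle w x hwx).mp rfl) hx,
      fun hwx => absurd ((h w x hwx).mp rfl) hx⟩
  · rw [toggleLoop_apply_of_ne hw]

lemma toggleLoop_eq_some_iff_of_ne (h : IsolatedUpToLoop f v) (hwx : w ≠ x) :
    toggleLoop f v w = some x ↔ f w = some x := by
  rcases eq_or_ne x v with rfl | hx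
  · rw [toggleLoop_apply_of_ne hwx]
  · exact h.toggleLoop_eq_some_iff hx

lemma symm_toggleLoop (h : IsolatedUpToLoop f v) (hf : ∀ a b, f a = some b ↔ f b = some a) :
    ∀ a b, toggleLoop f v a = some b ↔ toggleLoop f v b = some a := by
  intro a b
  rcases eq_or_ne a b with rfl | hab
  · rfl
  · rw [h.toggleLoop_eq_some_iff_of_ne hab, h.toggleLoop_eq_some_iff_of_ne hab.symm, hf]

lemma injective_toggleLoop (h : IsolatedUpToLoop f v)
    (hf : ∀ a b c, f a = some c → f b = some c → a = b) :
    ∀ a b c, toggleLoop f v a = some c → toggleLoop f v b = some c → a = b := by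
  intro a b c ha hb
  rcases eq_or_ne c v with rfl | hc
  · exact ((h.toggle a c ha).mpr rfl).trans ((h.toggle b c hb).mpr rfl).symm
  · exact hf a b c ((h.toggleLoop_eq_some_iff hc).mp ha) ((h.toggleLoop_eq_some_iff hc).mp hb)

lemma triangle_toggleLoop (h : IsolatedUpToLoop f v)
    (hf : ∀ a b c, f a = some b → f b = some c → f c = some a) :
    ∀ a b c, toggleLoop f v a = some b → toggleLoop f v b = some c →
      toggleLoop f v c = some a := by
  intro a b c hab hbc
  have hg := h.toggle
  rcases eq_or_ne a v with ha | ha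
  · have hb := (hg a b hab).mp ha
    have hc := (hg b c hbc).mp hb
    rw [hc, ha]
    rwa [hb, hc] at hbc
  · have hb : b ≠ v := fun hb => ha ((hg a b hab).mpr hb)
    have hc : c ≠ v := fun hc => hb ((hg b c hbc).mpr hc)
    rw [h.toggleLoop_eq_some_iff hb] at hab
    rw [h.toggleLoop_eq_some_iff hc] at hbc
    rw [h.toggleLoop_eq_some_iff ha]
    exact hf a b c hab hbc

lemma adjacent_toggleLoop_iff (h : IsolatedUpToLoop f v) (hw : w ≠ v) :
    (toggleLoop f v w ≠ none ∨ ∃ u, toggleLoop f v u = some w) ↔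
      (f w ≠ none ∨ ∃ u, f u = some w) := by
  simp only [toggleLoop_apply_of_ne hw, h.toggleLoop_eq_some_iff hw]

lemma card_nonLoop_toggleLoop [Finite α] (h : IsolatedUpToLoop f v) :
    Nat.card {w // ∃ x, w ≠ x ∧ toggleLoop f v w = some x} =
      Nat.card {w // ∃ x, w ≠ x ∧ f w = some x} :=
  Nat.card_congr <| Equiv.subtypeEquivRight fun _ =>
    exists_congr fun _ => and_congr_right h.toggleLoop_eq_some_iff_of_ne

lemma card_isolatedEdge_toggleLoop [Finite α] (h : IsolatedUpToLoop f v) :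
    Nat.card {w // ∃ x, w ≠ x ∧ toggleLoop f v w = some x ∧ toggleLoop f v x = none} =
      Nat.card {w // ∃ x, w ≠ x ∧ f w = some x ∧ f x = none} := by
  refine Nat.card_congr <| Equiv.subtypeEquivRight fun w => exists_congr fun x => ?_
  refine and_congr_right fun hwx => ?_
  rw [h.toggleLoop_eq_some_iff_of_ne hwx]
  refine and_congr_right fun hfx => ?_
  have hx : x ≠ v := fun hx => hwx (((h w x hfx).mpr hx).trans hx.symm)
  rw [toggleLoop_apply_of_ne hx]

lemma card_loop_toggleLoop [Finite α] (h : IsolatedUpToLoop f v) (hv : f v = none) :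
    Nat.card {w // toggleLoop f v w = some w} = Nat.card {w // f w = some w} + 1 := by
  have hloops : {w | toggleLoop f v w = some w} = insert v {w | f w = some w} := by
    ext w
    rcases eq_or_ne w v with rfl | hw
    · simpa using toggleLoop_self_eq_some_iff.mpr hv
    · simp [toggleLoop_apply_of_ne hw, hw]
  refine (Nat.card_congr (Equiv.setCongr hloops)).trans ?_
  rw [Nat.card_coe_set_eq, Set.ncard_insert_of_notMem (by simp [hv]), ← Nat.card_coe_set_eq]
  rfl

end IsolatedUpToLoop

end ToggleLoop

section ReducedGraphs

variable {n k2 k3 l2 l3 : ℕ} {A B : Fin n → Option (Fin n)} {v : Fin n}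

lemma isCycRed'_iff_isRootedRed :
    IsCycRed' A B ↔ IsRootedRed A B v ∧ A v ≠ none ∧ (B v ≠ none ∨ ∃ u, B u = some v) := by
  constructor
  · rintro ⟨h1, h2, h3, h4, h5⟩
    exact ⟨⟨h1, h2, h3, fun w _ => h4 w, h5⟩, h4 v⟩
  · rintro ⟨⟨h1, h2, h3, h4, h5⟩, hA, hB⟩
    refine ⟨h1, h2, h3, fun w => ?_, h5⟩
    rcases eq_or_ne w v with rfl | hw
    · exact ⟨hA, hB⟩
    · exact h4 w hw

lemma IsRootedRed.bAdjacent_root (hn : 2 ≤ n) (h : IsRootedRed A B v) (hA : A v = none) :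
    B v ≠ none ∨ ∃ u, B u = some v := by
  by_contra hB
  push Not at hB
  obtain ⟨w, hw⟩ := Fintype.exists_ne_of_one_lt_card (by rw [Fintype.card_fin]; omega) v
  refine hw ((h.2.2.2.2 v w).eq_of_forall_not_rel fun x => ⟨?_, ?_⟩)
  · rintro (hx | hx) <;> simp_all
  · rintro (hx | hx)
    · rw [h.1, hA] at hx
      simp at hx
    · exact hB.2 x hx

lemma IsRootedRed.isCycRed'_toggle_aLoop (hn : 2 ≤ n) (h : IsRootedRed A B v)
    (hA : A v = none) : IsCycRed' (toggleLoop A v) B := by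
  have hiso := isolatedUpToLoop_of_symm h.1 (.inl hA)
  refine ⟨hiso.symm_toggleLoop h.1, h.2.1, h.2.2.1, fun w => ?_, fun a b =>
    (h.2.2.2.2 a b).mono_of_ne fun x y hxy =>
      Or.imp_left (hiso.toggleLoop_eq_some_iff_of_ne hxy).mpr⟩
  rcases eq_or_ne w v with rfl | hw
  · exact ⟨by simp [toggleLoop_self_eq_some_iff.mpr hA], h.bAdjacent_root hn hA⟩
  · rw [toggleLoop_apply_of_ne hw]
    exact h.2.2.2.1 w hw

lemma IsCycRed'.isRootedRed_toggle_aLoop (h : IsCycRed' A B) (hA : A v = some v) :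
    IsRootedRed (toggleLoop A v) B v := by
  have hiso := isolatedUpToLoop_of_symm h.1 (.inr hA)
  refine ⟨hiso.symm_toggleLoop h.1, h.2.1, h.2.2.1, fun w hw => ?_, fun a b =>
    (h.2.2.2.2 a b).mono_of_ne fun x y hxy =>
      Or.imp_left (hiso.toggleLoop_eq_some_iff_of_ne hxy).mpr⟩
  rw [toggleLoop_apply_of_ne hw]
  exact h.2.2.2.1 w

lemma IsRootedRed.isCycRed'_toggle_bLoop (h : IsRootedRed A B v) (hA : A v ≠ none)
    (hB : IsolatedUpToLoop B v) (hBv : B v = none) : IsCycRed' A (toggleLoop B v) := by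
  refine ⟨h.1, hB.injective_toggleLoop h.2.1, hB.triangle_toggleLoop h.2.2.1, fun w => ?_,
    fun a b => (h.2.2.2.2 a b).mono_of_ne fun x y hxy =>
      Or.imp_right (hB.toggleLoop_eq_some_iff_of_ne hxy).mpr⟩
  rcases eq_or_ne w v with rfl | hw
  · exact ⟨hA, .inl (by simp [toggleLoop_self_eq_some_iff.mpr hBv])⟩
  · exact ⟨(h.2.2.2.1 w hw).1, (hB.adjacent_toggleLoop_iff hw).mpr (h.2.2.2.1 w hw).2⟩

lemma IsCycRed'.isRootedRed_toggle_bLoop (h : IsCycRed' A B) (hB : B v = some v) :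
    IsRootedRed A (toggleLoop B v) v := by
  have hiso := isolatedUpToLoop_of_injective h.2.1 hB
  refine ⟨h.1, hiso.injective_toggleLoop h.2.1, hiso.triangle_toggleLoop h.2.2.1,
    fun w hw => ⟨(h.2.2.2.1 w).1, (hiso.adjacent_toggleLoop_iff hw).mpr (h.2.2.2.1 w).2⟩,
    fun a b => (h.2.2.2.2 a b).mono_of_ne fun x y hxy =>
      Or.imp_right (hiso.toggleLoop_eq_some_iff_of_ne hxy).mpr⟩

lemma hasCombType_toggle_aLoop_iff (h : IsolatedUpToLoop A v) (hv : A v = none) :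
    HasCombType (toggleLoop A v) B k2 k3 (l2 + 1) l3 ↔ HasCombType A B k2 k3 l2 l3 := by
  simp only [HasCombType, h.card_nonLoop_toggleLoop, h.card_loop_toggleLoop hv,
    Nat.add_right_cancel_iff]

lemma hasCombType_toggle_bLoop_iff (h : IsolatedUpToLoop B v) (hv : B v = none) :
    HasCombType A (toggleLoop B v) k2 k3 l2 (l3 + 1) ↔ HasCombType A B k2 k3 l2 l3 := by
  simp only [HasCombType, h.card_isolatedEdge_toggleLoop, h.card_loop_toggleLoop hv,
    Nat.add_right_cancel_iff]

end ReducedGraphs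

section Counting

variable {n k2 k3 l2 l3 : ℕ}

lemma card_cycRed'_with_vertex :
    Nat.card {x : ((Fin n → Option (Fin n)) × (Fin n → Option (Fin n))) × Fin n //
      (IsCycRed' x.1.1 x.1.2 ∧ HasCombType x.1.1 x.1.2 k2 k3 l2 l3) ∧ True} =
      s n k2 k3 l2 l3 * n :=
  Nat.card_subtype_prod_eq_mul
    (fun p : (Fin n → Option (Fin n)) × (Fin n → Option (Fin n)) =>
      IsCycRed' p.1 p.2 ∧ HasCombType p.1 p.2 k2 k3 l2 l3)
    (fun _ _ => True) fun _ _ => by simp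

lemma card_cycRed'_with_aLoop :
    Nat.card {x : ((Fin n → Option (Fin n)) × (Fin n → Option (Fin n))) × Fin n //
      (IsCycRed' x.1.1 x.1.2 ∧ HasCombType x.1.1 x.1.2 k2 k3 l2 l3) ∧ x.1.1 x.2 = some x.2} =
      s n k2 k3 l2 l3 * l2 :=
  Nat.card_subtype_prod_eq_mul
    (fun p : (Fin n → Option (Fin n)) × (Fin n → Option (Fin n)) =>
      IsCycRed' p.1 p.2 ∧ HasCombType p.1 p.2 k2 k3 l2 l3)
    (fun p u => p.1 u = some u) fun _ hp => hp.2.2.2.1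

lemma card_cycRed'_with_bLoop :
    Nat.card {x : ((Fin n → Option (Fin n)) × (Fin n → Option (Fin n))) × Fin n //
      (IsCycRed' x.1.1 x.1.2 ∧ HasCombType x.1.1 x.1.2 k2 k3 l2 l3) ∧ x.1.2 x.2 = some x.2} =
      s n k2 k3 l2 l3 * l3 :=
  Nat.card_subtype_prod_eq_mul
    (fun p : (Fin n → Option (Fin n)) × (Fin n → Option (Fin n)) =>
      IsCycRed' p.1 p.2 ∧ HasCombType p.1 p.2 k2 k3 l2 l3)
    (fun p u => p.2 u = some u) fun _ hp => hp.2.2.2.2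

lemma card_rooted_of_root_aAdjacent_bAdjacent :
    Nat.card {t : (Fin n → Option (Fin n)) × (Fin n → Option (Fin n)) × Fin n //
      ((IsRootedRed t.1 t.2.1 t.2.2 ∧ HasCombType t.1 t.2.1 k2 k3 l2 l3) ∧ t.1 t.2.2 ≠ none) ∧
        (t.2.1 t.2.2 ≠ none ∨ ∃ u, t.2.1 u = some t.2.2)} =
      s n k2 k3 l2 l3 * n := by
  rw [← card_cycRed'_with_vertex]
  refine Nat.card_congr ((Equiv.prodAssoc _ _ _).symm.subtypeEquiv fun ⟨A, B, v⟩ => ?_)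
  simp only [Equiv.prodAssoc_symm_apply, and_true, isCycRed'_iff_isRootedRed (v := v)]
  tauto

lemma card_rooted_of_root_aFree (hn : 2 ≤ n) :
    Nat.card {t : (Fin n → Option (Fin n)) × (Fin n → Option (Fin n)) × Fin n //
      (IsRootedRed t.1 t.2.1 t.2.2 ∧ HasCombType t.1 t.2.1 k2 k3 l2 l3) ∧ t.1 t.2.2 = none} =
      s n k2 k3 (l2 + 1) l3 * (l2 + 1) := by
  let e : (Fin n → Option (Fin n)) × (Fin n → Option (Fin n)) × Fin n ≃
      ((Fin n → Option (Fin n)) × (Fin n → Option (Fin n))) × Fin n :=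
    { toFun t := ((toggleLoop t.1 t.2.2, t.2.1), t.2.2)
      invFun x := (toggleLoop x.1.1 x.2, x.1.2, x.2)
      left_inv t := by simp
      right_inv x := by simp }
  rw [← card_cycRed'_with_aLoop]
  refine Nat.card_congr (e.subtypeEquiv fun ⟨A, B, v⟩ => ?_)
  simp only [e, Equiv.coe_fn_mk, toggleLoop_self_eq_some_iff]
  refine and_congr_left fun hA => ⟨fun ⟨hR, hT⟩ => ?_, fun ⟨hC, hT⟩ => ?_⟩
  · have hiso := isolatedUpToLoop_of_symm hR.1 (.inl hA)
    exact ⟨hR.isCycRed'_toggle_aLoop hn hA, (hasCombType_toggle_aLoop_iff hiso hA).mpr hT⟩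
  · have hloop := toggleLoop_self_eq_some_iff.mpr hA
    have hiso := isolatedUpToLoop_toggleLoop_iff.mp (isolatedUpToLoop_of_symm hC.1 (.inr hloop))
    exact ⟨by simpa using hC.isRootedRed_toggle_aLoop hloop,
      (hasCombType_toggle_aLoop_iff hiso hA).mp hT⟩

lemma card_rooted_of_root_bFree :
    Nat.card {t : (Fin n → Option (Fin n)) × (Fin n → Option (Fin n)) × Fin n //
      ((IsRootedRed t.1 t.2.1 t.2.2 ∧ HasCombType t.1 t.2.1 k2 k3 l2 l3) ∧ t.1 t.2.2 ≠ none) ∧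
        ¬(t.2.1 t.2.2 ≠ none ∨ ∃ u, t.2.1 u = some t.2.2)} =
      s n k2 k3 l2 (l3 + 1) * (l3 + 1) := by
  let e : (Fin n → Option (Fin n)) × (Fin n → Option (Fin n)) × Fin n ≃
      ((Fin n → Option (Fin n)) × (Fin n → Option (Fin n))) × Fin n :=
    { toFun t := ((t.1, toggleLoop t.2.1 t.2.2), t.2.2)
      invFun x := (x.1.1, toggleLoop x.1.2 x.2, x.2)
      left_inv t := by simp
      right_inv x := by simp }
  rw [← card_cycRed'_with_bLoop]
  refine Nat.card_congr (e.subtypeEquiv fun ⟨A, B, v⟩ => ?_)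
  simp only [e, Equiv.coe_fn_mk, toggleLoop_self_eq_some_iff, ← isolatedUpToLoop_and_eq_none_iff]
  constructor
  · rintro ⟨⟨⟨hR, hT⟩, hA⟩, hiso, hB⟩
    exact ⟨⟨hR.isCycRed'_toggle_bLoop hA hiso hB, (hasCombType_toggle_bLoop_iff hiso hB).mpr hT⟩,
      hB⟩
  · rintro ⟨⟨hC, hT⟩, hB⟩
    have hloop := toggleLoop_self_eq_some_iff.mpr hB
    have hiso := isolatedUpToLoop_toggleLoop_iff.mp (isolatedUpToLoop_of_injective hC.2.1 hloop)
    exact ⟨⟨⟨by simpa using hC.isRootedRed_toggle_bLoop hloop,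
      (hasCombType_toggle_bLoop_iff hiso hB).mp hT⟩, (hC.2.2.2.1 v).1⟩, hiso, hB⟩

end Counting

theorem stmt3 (n k2 k3 l2 l3 : ℕ) (hn : 2 ≤ n) :
    L n k2 k3 l2 l3 =
      n * s n k2 k3 l2 l3 + (l2 + 1) * s n k2 k3 (l2 + 1) l3 +
        (l3 + 1) * s n k2 k3 l2 (l3 + 1) := by
  rw [L, Nat.card_subtype_eq_card_and_add_card_and_not _ fun t => t.1 t.2.2 ≠ none,
    Nat.card_subtype_eq_card_and_add_card_and_not _
      fun t => t.2.1 t.2.2 ≠ none ∨ ∃ u, t.2.1 u = some t.2.2]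
  simp only [not_not]
  rw [card_rooted_of_root_aAdjacent_bAdjacent, card_rooted_of_root_bFree,
    card_rooted_of_root_aFree hn]
  ring
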